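/- arXiv:1809.04122 — 2 statements merged into one kernel-verified Lean document; each statement's English description precedes it below -/
import Mathlib

section
/- Let θ be an algebraic integer with minimal polynomial f ∈ ℤ[t], let R = ℤ[θ], let 𝒫 be a maximal ideal of R, and let p be the rational prime with 𝒫 ∩ ℤ = pℤ. Let μ_𝒫 ∈ ℤ[t] be a monic polynomial of least degree such that μ_𝒫(θ) ∈ 𝒫, and let M = (p, μ_𝒫(t)) be the corresponding ideal of ℤ[t]. If μ̄_𝒫² divides f̄ in 𝔽_p[t] (i.e. f̄ has multiplicity ≥ 2 at μ̄_𝒫) and the localization R_𝒫 is a discrete valuation ring, then f ∉ M² and there exist g, h ∈ ℤ[t] such that f = μ_𝒫·h + p·g and gcd(μ̄_𝒫, ḡ) = 1 in 𝔽_p[t]. -/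
/-!
Let `Φ : ℤ[X] → ℤ[θ]` be evaluation at `θ`, so that `ker Φ = (f)` by Gauss's lemma, and let
`M = (p, μ)`. Minimality of `μ` gives `Φ⁻¹(𝓟) = M`, hence `M` is prime and `μ̄` is irreducible.
Dividing `f` by `μ` gives `f = μ h + p g` with `μ̄ ∣ h̄`, because `μ̄² ∣ f̄`; so if `μ̄ ∣ ḡ` then
`f ∈ M²`, and everything comes down to `f ∉ M²`. In the valuation ring `R_𝓟` one of `p` and
`μ(θ)` divides the other up to a unit `s ∉ 𝓟`; lifted to `ℤ[X]`, this is a relation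
`σ p - γ μ ∈ (f)` (or the same with `p` and `μ` exchanged) with `Φ σ = s`. If `f ∈ M²`, the
relation lies in `M²`, and as `M/M²` is free over `ℤ[X]/M` on `p` and `μ`, this forces `σ ∈ M`,
that is `s ∈ 𝓟`.
-/

open Polynomial

theorem span_pair_le_comap {R S : Type*} [CommRing R] [CommRing S] (f : R →+* S) {I : Ideal S}
    {x y : R} (hx : f x ∈ I) (hy : f y ∈ I) : Ideal.span {x, y} ≤ I.comap f :=
  Ideal.span_le.mpr (Set.pair_subset hx hy)

theorem exists_mul_eq_mul_or_of_preValuationRing_localization {R : Type*} [CommRing R]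
    (P : Ideal R) [P.IsPrime] [PreValuationRing (Localization.AtPrime P)] (a b : R) :
    ∃ s ∉ P, ∃ c, s * a = b * c ∨ s * b = a * c := by
  have of_mul_eq : ∀ a b : R, ∀ x : Localization.AtPrime P,
      algebraMap R _ a * x = algebraMap R _ b → ∃ s ∉ P, ∃ c, s * b = a * c := by
    intro a b x hx
    obtain ⟨⟨r, s⟩, hrs⟩ := IsLocalization.surj P.primeCompl x
    obtain ⟨t, ht⟩ : ∃ t : P.primeCompl, t * (b * s) = t * (a * r) :=
      IsLocalization.exists_of_eq (S := Localization.AtPrime P)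
        (by rw [map_mul, map_mul, ← hrs, ← hx, mul_assoc])
    exact ⟨t * s, P.primeCompl.mul_mem t.2 s.2, t * r, by linear_combination ht⟩
  obtain ⟨x, hx | hx⟩ := PreValuationRing.cond (algebraMap R (Localization.AtPrime P) a)
    (algebraMap R _ b)
  · obtain ⟨s, hs, c, h⟩ := of_mul_eq a b x hx
    exact ⟨s, hs, c, Or.inr h⟩
  · obtain ⟨s, hs, c, h⟩ := of_mul_eq b a x hx
    exact ⟨s, hs, c, Or.inl h⟩

section AdjoinSingleton

variable {R S : Type*} [CommRing R] [CommRing S] [Algebra R S]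

theorem aeval_adjoin_singleton_surjective (x : S) :
    Function.Surjective
      (aeval (R := R) (⟨x, Algebra.self_mem_adjoin_singleton R x⟩ : Algebra.adjoin R {x})) := by
  rintro ⟨y, hy⟩
  rw [Algebra.adjoin_singleton_eq_range_aeval] at hy
  obtain ⟨q, rfl⟩ := hy
  exact ⟨q, Subtype.ext (aeval_subalgebra_coe q _ _)⟩

theorem ker_aeval_adjoin_singleton [IsDomain R] [IsIntegrallyClosed R] [IsDomain S]
    [Module.IsTorsionFree R S] {x : S} (hx : IsIntegral R x) :
    RingHom.ker (aeval (R := R) (⟨x, Algebra.self_mem_adjoin_singleton R x⟩ :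
      Algebra.adjoin R {x})).toRingHom = Ideal.span {minpoly R x} := by
  rw [← minpoly.ker_eval hx]
  ext q
  simp [RingHom.mem_ker, ← Subalgebra.coe_eq_zero, aeval_subalgebra_coe]

end AdjoinSingleton

section Reduction

variable {p : ℕ}

theorem C_natCast_dvd_iff_map_eq_zero (e : ℤ[X]) :
    C (p : ℤ) ∣ e ↔ e.map (Int.castRingHom (ZMod p)) = 0 := by
  rw [C_dvd_iff_dvd_coeff]
  simp [Polynomial.ext_iff, ZMod.intCast_zmod_eq_zero_iff_dvd]

theorem mem_span_C_pair_iff (μ q : ℤ[X]) :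
    q ∈ Ideal.span {C (p : ℤ), μ} ↔
      μ.map (Int.castRingHom (ZMod p)) ∣ q.map (Int.castRingHom (ZMod p)) := by
  constructor
  · intro hq
    obtain ⟨a, b, rfl⟩ := Ideal.mem_span_pair.mp hq
    exact ⟨b.map (Int.castRingHom (ZMod p)), by simp [mul_comm]⟩
  · rintro ⟨K, hK⟩
    obtain ⟨k, rfl⟩ := map_surjective (Int.castRingHom (ZMod p)) ZMod.intCast_surjective K
    obtain ⟨l, hl⟩ := (C_natCast_dvd_iff_map_eq_zero (p := p) (q - μ * k)).mpr
      (by rw [Polynomial.map_sub, Polynomial.map_mul, hK, sub_self])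
    exact Ideal.mem_span_pair.mpr ⟨l, k, by linear_combination -hl⟩

theorem exists_eq_C_mul_add_sq_mul_of_mem_span_C_pair_sq {μ x : ℤ[X]}
    (hx : x ∈ Ideal.span {C (p : ℤ), μ} ^ 2) :
    ∃ m ∈ Ideal.span {C (p : ℤ), μ}, ∃ u, x = C (p : ℤ) * m + μ ^ 2 * u := by
  have hle : Ideal.span {C (p : ℤ), μ} ^ 2 ≤
      Ideal.span {C (p : ℤ)} * Ideal.span {C (p : ℤ), μ} ⊔ Ideal.span {μ ^ 2} := by
    rw [sq]
    refine Ideal.mul_le.mpr fun r hr s hs => ?_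
    obtain ⟨a, b, rfl⟩ := Ideal.mem_span_pair.mp hr
    obtain ⟨c, d, rfl⟩ := Ideal.mem_span_pair.mp hs
    refine Submodule.mem_sup.mpr ⟨C (p : ℤ) * (a * (c * C (p : ℤ) + d * μ) + b * c * μ),
      Ideal.mem_span_singleton_mul.mpr ⟨_, ?_, rfl⟩, μ ^ 2 * (b * d),
      Ideal.mem_span_singleton'.mpr ⟨b * d, mul_comm _ _⟩, by ring⟩
    exact Ideal.add_mem _ (Ideal.mul_mem_left _ _ hs)
      (Ideal.mul_mem_left _ _ (Ideal.subset_span (by simp)))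
  obtain ⟨y, hy, z, hz, rfl⟩ := Submodule.mem_sup.mp (hle hx)
  obtain ⟨m, hm, rfl⟩ := Ideal.mem_span_singleton_mul.mp hy
  obtain ⟨u, rfl⟩ := Ideal.mem_span_singleton'.mp hz
  exact ⟨m, hm, u, by ring⟩

theorem exists_eq_mul_add_C_mul_of_sq_dvd {μ f : ℤ[X]} (hμ : μ.Monic)
    (hf : μ.map (Int.castRingHom (ZMod p)) ^ 2 ∣ f.map (Int.castRingHom (ZMod p))) :
    ∃ g h : ℤ[X], f = μ * h + C (p : ℤ) * g ∧ h ∈ Ideal.span {C (p : ℤ), μ} := by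
  set ψ := Int.castRingHom (ZMod p)
  have hμ' : (μ.map ψ).Monic := hμ.map ψ
  obtain ⟨g, hg⟩ : C (p : ℤ) ∣ f %ₘ μ := by
    rw [C_natCast_dvd_iff_map_eq_zero, map_modByMonic ψ hμ, modByMonic_eq_zero_iff_dvd hμ']
    exact (dvd_pow_self _ two_ne_zero).trans hf
  have hfgh : f = μ * (f /ₘ μ) + C (p : ℤ) * g := by
    linear_combination -(modByMonic_add_div f μ) + hg
  refine ⟨g, f /ₘ μ, hfgh, (mem_span_C_pair_iff _ _).mpr ?_⟩
  obtain ⟨k, hk⟩ := hf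
  refine ⟨k, hμ'.isRegular.left ?_⟩
  have hfbar : f.map ψ = μ.map ψ * (f /ₘ μ).map ψ := by
    simpa [ψ] using congrArg (Polynomial.map ψ) hfgh
  change μ.map ψ * (f /ₘ μ).map ψ = μ.map ψ * (μ.map ψ * k)
  rw [← hfbar, hk, sq, mul_assoc]

theorem prime_map_of_isPrime_span_C_pair {μ : ℤ[X]}
    (hμ : μ.map (Int.castRingHom (ZMod p)) ≠ 0) (hM : (Ideal.span {C (p : ℤ), μ}).IsPrime) :
    Prime (μ.map (Int.castRingHom (ZMod p))) := by
  refine ⟨hμ, fun hunit => hM.ne_top ?_, fun A B hAB => ?_⟩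
  · rw [Ideal.eq_top_iff_one, mem_span_C_pair_iff, Polynomial.map_one]
    exact hunit.dvd
  obtain ⟨a, rfl⟩ := map_surjective (Int.castRingHom (ZMod p)) ZMod.intCast_surjective A
  obtain ⟨b, rfl⟩ := map_surjective (Int.castRingHom (ZMod p)) ZMod.intCast_surjective B
  simp only [← mem_span_C_pair_iff, ← Polynomial.map_mul] at hAB ⊢
  exact hM.mem_or_mem hAB

variable [Fact p.Prime]

theorem mem_span_C_pair_of_mul_add_mul_mem_sq {μ a b : ℤ[X]}
    (hμ : μ.map (Int.castRingHom (ZMod p)) ≠ 0)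
    (h : a * C (p : ℤ) + b * μ ∈ Ideal.span {C (p : ℤ), μ} ^ 2) :
    a ∈ Ideal.span {C (p : ℤ), μ} ∧ b ∈ Ideal.span {C (p : ℤ), μ} := by
  obtain ⟨m, hm, u, hmu⟩ := exists_eq_C_mul_add_sq_mul_of_mem_span_C_pair_sq h
  have hrel : (b - μ * u) * μ = C (p : ℤ) * (m - a) := by linear_combination hmu
  obtain ⟨e, he⟩ : C (p : ℤ) ∣ b - μ * u := by
    rw [C_natCast_dvd_iff_map_eq_zero]
    simpa [hμ] using congrArg (Polynomial.map (Int.castRingHom (ZMod p))) hrel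
  have hCp : C (p : ℤ) ≠ 0 := by simp [(Fact.out : p.Prime).ne_zero]
  have ha : a = m - e * μ := by
    have : C (p : ℤ) * (m - a) = C (p : ℤ) * (e * μ) := by rw [← hrel, he, mul_assoc]
    linear_combination -(mul_left_cancel₀ hCp this)
  have hμM : μ ∈ Ideal.span {C (p : ℤ), μ} := Ideal.subset_span (by simp)
  have hpM : C (p : ℤ) ∈ Ideal.span {C (p : ℤ), μ} := Ideal.subset_span (by simp)
  refine ⟨ha ▸ Ideal.sub_mem _ hm (Ideal.mul_mem_left _ _ hμM), ?_⟩
  rw [show b = μ * u + C (p : ℤ) * e by linear_combination he]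
  exact Ideal.add_mem _ (Ideal.mul_mem_right _ _ hμM) (Ideal.mul_mem_right _ _ hpM)

theorem exists_monic_mem_span_C_pair {r : ℤ[X]} (hr : r.map (Int.castRingHom (ZMod p)) ≠ 0) :
    ∃ a : ℤ[X], a.Monic ∧ a.degree ≤ r.degree ∧ a ∈ Ideal.span {C (p : ℤ), r} := by
  set r' := r.map (Int.castRingHom (ZMod p))
  obtain ⟨a, ha, hdeg, hmonic⟩ := lifts_and_degree_eq_and_monic
    (map_surjective (Int.castRingHom (ZMod p)) ZMod.intCast_surjective
      (r' * C r'.leadingCoeff⁻¹)) (monic_mul_leadingCoeff_inv hr)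
  refine ⟨a, hmonic, ?_, (mem_span_C_pair_iff r a).mpr ⟨C r'.leadingCoeff⁻¹, ha⟩⟩
  rw [hdeg, degree_mul_leadingCoeff_inv _ hr]
  exact degree_map_le

theorem comap_eq_span_C_pair {R : Type*} [CommRing R] (Φ : ℤ[X] →+* R) (P : Ideal R)
    {μ : ℤ[X]} (hμ : μ.Monic) (hpP : Φ (C (p : ℤ)) ∈ P) (hμP : Φ μ ∈ P)
    (hmin : ∀ q : ℤ[X], q.Monic → Φ q ∈ P → μ.degree ≤ q.degree) :
    P.comap Φ = Ideal.span {C (p : ℤ), μ} := by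
  refine le_antisymm (fun q hq => ?_) (span_pair_le_comap Φ hpP hμP)
  have hdiv := modByMonic_add_div q μ
  have hr : Φ (q %ₘ μ) ∈ P := by
    rw [show q %ₘ μ = q - μ * (q /ₘ μ) by linear_combination hdiv, map_sub, map_mul]
    exact P.sub_mem hq (P.mul_mem_right _ hμP)
  by_cases hr0 : (q %ₘ μ).map (Int.castRingHom (ZMod p)) = 0
  · obtain ⟨l, hl⟩ := (C_natCast_dvd_iff_map_eq_zero _).mpr hr0
    exact Ideal.mem_span_pair.mpr ⟨l, q /ₘ μ, by linear_combination hdiv - hl⟩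
  obtain ⟨a, ha, hdeg, haM⟩ := exists_monic_mem_span_C_pair hr0
  have haP : a ∈ P.comap Φ := span_pair_le_comap Φ hpP hr haM
  exact absurd ((hmin a ha haP).trans hdeg) (not_le.mpr (degree_modByMonic_lt q hμ))

theorem not_ker_le_span_C_pair_sq {R : Type*} [CommRing R] (P : Ideal R) [P.IsPrime]
    [PreValuationRing (Localization.AtPrime P)] {Φ : ℤ[X] →+* R} (hΦ : Function.Surjective Φ)
    {μ : ℤ[X]} (hμ : μ.map (Int.castRingHom (ZMod p)) ≠ 0) (hpP : Φ (C (p : ℤ)) ∈ P)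
    (hμP : Φ μ ∈ P) : ¬ RingHom.ker Φ ≤ Ideal.span {C (p : ℤ), μ} ^ 2 := by
  intro hker
  have hle : Ideal.span {C (p : ℤ), μ} ≤ P.comap Φ := span_pair_le_comap Φ hpP hμP
  obtain ⟨s, hs, c, hsc⟩ :=
    exists_mul_eq_mul_or_of_preValuationRing_localization P (Φ (C p)) (Φ μ)
  obtain ⟨σ, rfl⟩ := hΦ s
  obtain ⟨γ, rfl⟩ := hΦ c
  refine hs (hle ?_)
  rcases hsc with h | h
  · refine (mem_span_C_pair_of_mul_add_mul_mem_sq hμ (b := -γ) (hker ?_)).1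
    rw [RingHom.mem_ker]
    simp only [map_add, map_mul, map_neg, h]
    ring
  · refine (mem_span_C_pair_of_mul_add_mul_mem_sq hμ (a := -γ) (hker ?_)).2
    rw [RingHom.mem_ker]
    simp only [map_add, map_mul, map_neg, h]
    ring

end Reduction

/-- Let `θ` be an algebraic integer with minimal polynomial `f`, `R = ℤ[θ]`, `𝓟` a maximal
ideal of `R` lying over the rational prime `p`, `μ_𝓟` a monic integer polynomial of least
degree with `μ_𝓟(θ) ∈ 𝓟`, and `M = (p, μ_𝓟(t)) ⊆ ℤ[t]`.  If `μ̄_𝓟²` divides `f̄` in `𝔽_p[t]`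
and the localization `R_𝓟` is a discrete valuation ring, then `f ∉ M²` and there exist
`g, h ∈ ℤ[t]` with `f = μ_𝓟 h + p g` and `gcd(μ̄_𝓟, ḡ) = 1` in `𝔽_p[t]`. -/
theorem dvr_of_multiplicity_ge_two
    (θ : ℂ) (hθ : IsIntegral ℤ θ)
    (𝓟 : Ideal (Algebra.adjoin ℤ {θ})) [𝓟.IsMaximal]
    (p : ℕ) [Fact p.Prime]
    (h𝓟p : 𝓟.comap (algebraMap ℤ (Algebra.adjoin ℤ {θ})) = Ideal.span {(p : ℤ)})
    (μ : ℤ[X]) (hμmonic : μ.Monic)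
    (hμ𝓟 : aeval (⟨θ, Algebra.self_mem_adjoin_singleton ℤ θ⟩ : Algebra.adjoin ℤ {θ}) μ ∈ 𝓟)
    (hμmin : ∀ q : ℤ[X], q.Monic →
      aeval (⟨θ, Algebra.self_mem_adjoin_singleton ℤ θ⟩ : Algebra.adjoin ℤ {θ}) q ∈ 𝓟 →
      μ.degree ≤ q.degree)
    (hmult : (μ.map (Int.castRingHom (ZMod p))) ^ 2 ∣
      (minpoly ℤ θ).map (Int.castRingHom (ZMod p)))
    (hdvr : IsDiscreteValuationRing (Localization.AtPrime 𝓟)) :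
    minpoly ℤ θ ∉ (Ideal.span {Polynomial.C (p : ℤ), μ}) ^ 2 ∧
      ∃ g h : ℤ[X], minpoly ℤ θ = μ * h + Polynomial.C (p : ℤ) * g ∧
        IsUnit (EuclideanDomain.gcd (μ.map (Int.castRingHom (ZMod p)))
          (g.map (Int.castRingHom (ZMod p)))) := by
  set Φ := (aeval (R := ℤ)
    (⟨θ, Algebra.self_mem_adjoin_singleton ℤ θ⟩ : Algebra.adjoin ℤ {θ})).toRingHom
  set M := Ideal.span {C (p : ℤ), μ}
  have hpP : Φ (C (p : ℤ)) ∈ 𝓟 := by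
    simpa [Φ, ← h𝓟p] using Ideal.mem_span_singleton_self (p : ℤ)
  have hμ0 : μ.map (Int.castRingHom (ZMod p)) ≠ 0 := (hμmonic.map _).ne_zero
  have hfM : minpoly ℤ θ ∉ M ^ 2 := fun hf =>
    not_ker_le_span_C_pair_sq 𝓟 (aeval_adjoin_singleton_surjective θ) hμ0 hpP hμ𝓟
      (by rw [ker_aeval_adjoin_singleton hθ, Ideal.span_le, Set.singleton_subset_iff]; exact hf)
  have hprime : Prime (μ.map (Int.castRingHom (ZMod p))) := by
    refine prime_map_of_isPrime_span_C_pair hμ0 ?_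
    rw [← comap_eq_span_C_pair Φ 𝓟 hμmonic hpP hμ𝓟 hμmin]
    exact Ideal.comap_isPrime Φ 𝓟
  obtain ⟨g, h, hfgh, hhM⟩ := exists_eq_mul_add_C_mul_of_sq_dvd hμmonic hmult
  refine ⟨hfM, g, h, hfgh, ?_⟩
  rw [EuclideanDomain.gcd_isUnit_iff, hprime.irreducible.coprime_iff_not_dvd,
    ← mem_span_C_pair_iff]
  intro hgM
  have hμM : μ ∈ M := Ideal.subset_span (by simp)
  have hpM : C (p : ℤ) ∈ M := Ideal.subset_span (by simp)
  exact hfM (hfgh ▸ sq M ▸ Ideal.add_mem _ (Ideal.mul_mem_mul hμM hhM)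
    (Ideal.mul_mem_mul hpM hgM))
end

section
/- Let θ be an algebraic integer with minimal polynomial f ∈ ℤ[t], let R = ℤ[θ], let 𝒫 be a maximal ideal of R, and let p be the rational prime with 𝒫 ∩ ℤ = pℤ. Let μ_𝒫 ∈ ℤ[t] be a monic polynomial of least degree such that μ_𝒫(θ) ∈ 𝒫. If the localization R_𝒫 is a discrete valuation ring, then there exist g, h ∈ ℤ[t] such that f = μ_𝒫·h + p·g and gcd(μ̄_𝒫, ḡ, h̄) = 1 in 𝔽_p[t]. -/
/-!
Since `p ∈ 𝒫` and `μ` has least degree, `q(θ) ∈ 𝒫` exactly when `μ̄ ∣ q̄`. Hence `μ̄` is prime in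
`𝔽_p[t]`, and `f(θ) = 0` gives `μ̄ ∣ f̄`, i.e. `f = μ h + p g`. If the gcd were not `1`, then
`μ̄ ∣ ḡ` and `μ̄ ∣ h̄`, so `g(θ), h(θ) ∈ 𝒫`. In the valuation ring `R_𝒫` one of `p`, `μ(θ)`
divides the other, so `μ(θ) s = p y` or `p s = μ(θ) y` for some `s ∉ 𝒫`. As `R/pR ≅ 𝔽_p[t]/(μ̄ h̄)`,
`μ(θ) y ∈ pR` forces `y ∈ h(θ) R + p R`. In the first case this puts `s` into `𝒫` at once; in the
second, `μ(θ) h(θ) = -p g(θ)` turns `p s = μ(θ) y` into `s = μ(θ) b - g(θ) t ∈ 𝒫`.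
-/
open Polynomial

namespace Polynomial

theorem C_dvd_of_map_intCast_eq_zero {p : ℕ} {q : ℤ[X]}
    (hq : q.map (Int.castRingHom (ZMod p)) = 0) : C (p : ℤ) ∣ q := by
  refine (C_dvd_iff_dvd_coeff _ _).2 fun n ↦ (ZMod.intCast_zmod_eq_zero_iff_dvd _ p).1 ?_
  simpa using congrArg (coeff · n) hq

theorem exists_eq_mul_add_C_mul_of_map_dvd {p : ℕ} {q₁ q₂ : ℤ[X]}
    (h : q₂.map (Int.castRingHom (ZMod p)) ∣ q₁.map (Int.castRingHom (ZMod p))) :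
    ∃ a b : ℤ[X], q₁ = q₂ * a + C (p : ℤ) * b := by
  obtain ⟨a', ha'⟩ := h
  obtain ⟨a, rfl⟩ := map_surjective (Int.castRingHom (ZMod p)) ZMod.intCast_surjective a'
  obtain ⟨b, hb⟩ := C_dvd_of_map_intCast_eq_zero (p := p) (q := q₁ - q₂ * a)
    (by rw [Polynomial.map_sub, Polynomial.map_mul, ha', sub_self])
  exact ⟨a, b, by rw [← hb]; ring⟩

theorem aeval_mem_of_map_dvd {A : Type*} [CommRing A] {P : Ideal A} {x : A} {p : ℕ}
    {q₁ q₂ : ℤ[X]} (h₂ : aeval x q₂ ∈ P) (hp : (p : A) ∈ P)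
    (h : q₂.map (Int.castRingHom (ZMod p)) ∣ q₁.map (Int.castRingHom (ZMod p))) :
    aeval x q₁ ∈ P := by
  obtain ⟨a, b, rfl⟩ := exists_eq_mul_add_C_mul_of_map_dvd h
  rw [map_add, map_mul, map_mul, map_natCast, map_natCast]
  exact P.add_mem (P.mul_mem_right _ h₂) (P.mul_mem_right _ hp)

end Polynomial

/-- `μ` is a monic integer polynomial of least degree with `μ(x) ∈ P` (the paper's `μ_𝒫`). -/
structure IsMinimalMonicMem {A : Type*} [CommRing A] (P : Ideal A) (x : A) (μ : ℤ[X]) : Prop where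
  monic : μ.Monic
  aeval_mem : aeval x μ ∈ P
  degree_le : ∀ q : ℤ[X], q.Monic → aeval x q ∈ P → μ.degree ≤ q.degree

namespace IsMinimalMonicMem

variable {A : Type*} [CommRing A] {P : Ideal A} {x : A} {μ : ℤ[X]} {p : ℕ}

theorem map_dvd_of_aeval_mem [Fact p.Prime] (hμ : IsMinimalMonicMem P x μ) (hp : (p : A) ∈ P)
    {q : ℤ[X]} (hq : aeval x q ∈ P) :
    μ.map (Int.castRingHom (ZMod p)) ∣ q.map (Int.castRingHom (ZMod p)) := by
  set φ := Int.castRingHom (ZMod p)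
  have hμφ : (μ.map φ).Monic := hμ.monic.map φ
  rw [← modByMonic_eq_zero_iff_dvd hμφ]
  by_contra hr
  obtain ⟨d, hd⟩ := map_surjective φ ZMod.intCast_surjective (q.map φ /ₘ μ.map φ)
  have hr_eq : (q - μ * d).map φ = q.map φ %ₘ μ.map φ := by
    rw [Polynomial.map_sub, Polynomial.map_mul, hd]
    linear_combination -modByMonic_add_div (q.map φ) (μ.map φ)
  -- A nonzero remainder `q̄ %ₘ μ̄`, made monic and lifted to `ℤ[X]`, would be a monic `w` with
  -- `w(x) ∈ P` of smaller degree than `μ`.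
  obtain ⟨w, hw_map, hw_deg, hw_monic⟩ := lifts_and_degree_eq_and_monic
    ((mem_lifts _).2 (map_surjective φ ZMod.intCast_surjective _)) (monic_mul_leadingCoeff_inv hr)
  have hqd_mem : aeval x (q - μ * d) ∈ P := by
    rw [map_sub, map_mul]; exact P.sub_mem hq (P.mul_mem_right _ hμ.aeval_mem)
  have hw_mem : aeval x w ∈ P :=
    aeval_mem_of_map_dvd hqd_mem hp (by rw [hr_eq, hw_map]; exact dvd_mul_right _ _)
  have hw_lt : w.degree < μ.degree := by
    rw [hw_deg, degree_mul_leadingCoeff_inv _ hr, ← hμ.monic.degree_map φ]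
    exact degree_modByMonic_lt _ hμφ
  exact (hμ.degree_le w hw_monic hw_mem).not_gt hw_lt

theorem aeval_mem_iff [Fact p.Prime] (hμ : IsMinimalMonicMem P x μ) (hp : (p : A) ∈ P)
    {q : ℤ[X]} : aeval x q ∈ P ↔
      μ.map (Int.castRingHom (ZMod p)) ∣ q.map (Int.castRingHom (ZMod p)) :=
  ⟨hμ.map_dvd_of_aeval_mem hp, aeval_mem_of_map_dvd hμ.aeval_mem hp⟩

theorem prime_map [Fact p.Prime] [P.IsPrime] (hμ : IsMinimalMonicMem P x μ) (hp : (p : A) ∈ P) :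
    Prime (μ.map (Int.castRingHom (ZMod p))) := by
  set φ := Int.castRingHom (ZMod p)
  refine ⟨(hμ.monic.map φ).ne_zero, fun hu ↦ ?_, fun a b hab ↦ ?_⟩
  · have : μ = 1 := hμ.monic.natDegree_eq_zero.1 <| by
      rw [← hμ.monic.natDegree_map φ, natDegree_eq_zero_of_isUnit hu]
    exact (‹P.IsPrime›).ne_top <| (P.eq_top_iff_one).2 <| by simpa [this] using hμ.aeval_mem
  · obtain ⟨a, rfl⟩ := map_surjective φ ZMod.intCast_surjective a
    obtain ⟨b, rfl⟩ := map_surjective φ ZMod.intCast_surjective b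
    rw [← Polynomial.map_mul, ← hμ.aeval_mem_iff hp, map_mul] at hab
    simpa only [hμ.aeval_mem_iff hp] using ‹P.IsPrime›.mem_or_mem hab

end IsMinimalMonicMem

theorem EuclideanDomain.dvd_and_dvd_of_not_isUnit_gcd_gcd {E : Type*} [EuclideanDomain E]
    [DecidableEq E] {a b c : E} (ha : Irreducible a) (h : ¬IsUnit (gcd (gcd a b) c)) :
    a ∣ b ∧ a ∣ c := by
  have ha_dvd : a ∣ gcd (gcd a b) c :=
    ((ha.dvd_iff.1 ((gcd_dvd_left _ _).trans (gcd_dvd_left _ _))).resolve_left h).dvd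
  exact ⟨ha_dvd.trans ((gcd_dvd_left _ _).trans (gcd_dvd_right _ _)),
    ha_dvd.trans (gcd_dvd_right _ _)⟩

theorem Algebra.aeval_adjoin_singleton_surjective {R A : Type*} [CommRing R] [CommRing A]
    [Algebra R A] (a : A) :
    Function.Surjective
      (aeval (R := R) (⟨a, self_mem_adjoin_singleton R a⟩ : adjoin R {a})) := by
  intro z
  obtain ⟨q, hq⟩ :=
    (adjoin_singleton_eq_range_aeval R a ▸ z.2 : (z : A) ∈ (aeval (R := R) a).range)
  exact ⟨q, Subtype.ext (by rw [aeval_subalgebra_coe]; exact hq)⟩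

theorem IsLocalization.exists_mul_eq_mul_of_algebraMap_dvd {R S : Type*} [CommRing R]
    [CommRing S] [Algebra R S] (M : Submonoid R) [IsLocalization M S] {a b : R}
    (h : algebraMap R S a ∣ algebraMap R S b) : ∃ s ∈ M, ∃ y, b * s = a * y := by
  obtain ⟨z, hz⟩ := h
  obtain ⟨⟨y, s⟩, hys⟩ := IsLocalization.surj M z
  obtain ⟨c, hc⟩ := IsLocalization.exists_of_eq (M := M) (S := S) (x := b * s) (y := a * y) <| by
    rw [map_mul, map_mul, hz, ← hys, mul_assoc]
  exact ⟨c * s, M.mul_mem c.2 s.2, c * y, by linear_combination hc⟩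

theorem Ideal.exists_mul_eq_mul_of_preValuationRing_atPrime {A : Type*} [CommRing A]
    (P : Ideal A) [P.IsPrime] [PreValuationRing (Localization.AtPrime P)] (a b : A) :
    ∃ s ∉ P, ∃ y, a * s = b * y ∨ b * s = a * y := by
  rcases ValuationRing.dvd_total (algebraMap A (Localization.AtPrime P) a)
    (algebraMap A (Localization.AtPrime P) b) with h | h
  · obtain ⟨s, hs, y, hy⟩ := IsLocalization.exists_mul_eq_mul_of_algebraMap_dvd P.primeCompl h
    exact ⟨s, hs, y, .inr hy⟩
  · obtain ⟨s, hs, y, hy⟩ := IsLocalization.exists_mul_eq_mul_of_algebraMap_dvd P.primeCompl h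
    exact ⟨s, hs, y, .inl hy⟩

/-- With `A ≅ ℤ[X]/(f)` and `f̄ = μ̄ h̄`, the relation `μ(x) y ∈ pA` reads `μ̄ h̄ ∣ μ̄ ȳ`. -/
theorem exists_eq_aeval_mul_add_natCast_mul {A : Type*} [CommRing A] {x : A} {p : ℕ}
    [Fact p.Prime] {f μ g h : ℤ[X]} (hμ : μ.Monic) (hf : f = μ * h + C (p : ℤ) * g)
    (hker : ∀ q, aeval x q = 0 → f ∣ q) (hx : Function.Surjective (aeval x : ℤ[X] →ₐ[ℤ] A))
    {y c : A} (hy : aeval x μ * y = p * c) : ∃ t b : A, y = aeval x h * t + p * b := by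
  set φ := Int.castRingHom (ZMod p)
  obtain ⟨Q, rfl⟩ := hx y
  obtain ⟨Q', rfl⟩ := hx c
  obtain ⟨k, hk⟩ := hker (μ * Q - C (p : ℤ) * Q') (by simp [hy])
  have hp : C (φ p) = 0 := by simp [φ]
  have hQ : (Q - h * k).map φ = 0 := by
    refine mul_left_cancel₀ (hμ.map φ).ne_zero ?_
    rw [Polynomial.map_sub, Polynomial.map_mul, mul_zero]
    have := congrArg (map φ) hk
    simp only [hf, Polynomial.map_sub, Polynomial.map_add, Polynomial.map_mul, map_C, hp] at this
    linear_combination this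
  obtain ⟨b, hb⟩ := C_dvd_of_map_intCast_eq_zero hQ
  exact ⟨aeval x k, aeval x b, by
    have := congrArg (aeval x) hb
    simp only [map_sub, map_mul, map_natCast] at this
    linear_combination this⟩

/-- **Converse of Lüneburg's test.**  Let `θ` be an algebraic integer with minimal polynomial
`f`, `R = ℤ[θ]`, `𝓟` a maximal ideal of `R` lying over the rational prime `p`, and `μ_𝓟` a
monic integer polynomial of least degree with `μ_𝓟(θ) ∈ 𝓟`.  If the localization `R_𝓟` is a
discrete valuation ring, then there exist `g, h ∈ ℤ[t]` such that `f = μ_𝓟 h + p g` and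
`gcd(μ̄_𝓟, ḡ, h̄) = 1` in `𝔽_p[t]`. -/
theorem exists_gcd_one_of_dvr
    (θ : ℂ) (hθ : IsIntegral ℤ θ)
    (𝓟 : Ideal (Algebra.adjoin ℤ {θ})) [𝓟.IsMaximal]
    (p : ℕ) [Fact p.Prime]
    (h𝓟p : 𝓟.comap (algebraMap ℤ (Algebra.adjoin ℤ {θ})) = Ideal.span {(p : ℤ)})
    (μ : ℤ[X]) (hμmonic : μ.Monic)
    (hμ𝓟 : aeval (⟨θ, Algebra.self_mem_adjoin_singleton ℤ θ⟩ : Algebra.adjoin ℤ {θ}) μ ∈ 𝓟)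
    (hμmin : ∀ q : ℤ[X], q.Monic →
      aeval (⟨θ, Algebra.self_mem_adjoin_singleton ℤ θ⟩ : Algebra.adjoin ℤ {θ}) q ∈ 𝓟 →
      μ.degree ≤ q.degree)
    (hdvr : IsDiscreteValuationRing (Localization.AtPrime 𝓟)) :
    ∃ g h : ℤ[X], minpoly ℤ θ = μ * h + Polynomial.C (p : ℤ) * g ∧
      IsUnit (EuclideanDomain.gcd
        (EuclideanDomain.gcd (μ.map (Int.castRingHom (ZMod p)))
          (g.map (Int.castRingHom (ZMod p))))
        (h.map (Int.castRingHom (ZMod p)))) := by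
  set x : Algebra.adjoin ℤ {θ} := ⟨θ, Algebra.self_mem_adjoin_singleton ℤ θ⟩
  have hp : (p : Algebra.adjoin ℤ {θ}) ∈ 𝓟 := by
    rw [← map_natCast (algebraMap ℤ _), ← Ideal.mem_comap, h𝓟p]
    exact Ideal.mem_span_singleton_self _
  have hμ : IsMinimalMonicMem 𝓟 x μ := ⟨hμmonic, hμ𝓟, hμmin⟩
  have hker (q : ℤ[X]) : aeval x q = 0 ↔ minpoly ℤ θ ∣ q := by
    rw [← minpoly.isIntegrallyClosed_dvd_iff hθ, ← ZeroMemClass.coe_eq_zero, aeval_subalgebra_coe]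
  have hx := Algebra.aeval_adjoin_singleton_surjective (R := ℤ) θ
  obtain ⟨h, g, hfg⟩ := exists_eq_mul_add_C_mul_of_map_dvd <|
    (hμ.aeval_mem_iff hp).1 (((hker _).2 dvd_rfl).symm ▸ 𝓟.zero_mem)
  refine ⟨g, h, hfg, by_contra fun hgcd ↦ ?_⟩
  obtain ⟨hg, hh⟩ := EuclideanDomain.dvd_and_dvd_of_not_isUnit_gcd_gcd
    (hμ.prime_map hp).irreducible hgcd
  rw [← hμ.aeval_mem_iff hp] at hg hh
  obtain ⟨s, hs, y, hy | hy⟩ := 𝓟.exists_mul_eq_mul_of_preValuationRing_atPrime (aeval x μ) p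
  · obtain ⟨t, b, rfl⟩ := exists_eq_aeval_mul_add_natCast_mul hμmonic hfg (hker · |>.1) hx hy
    exact hs (𝓟.add_mem (𝓟.mul_mem_right _ hh) (𝓟.mul_mem_right _ hp))
  · obtain ⟨t, b, rfl⟩ := exists_eq_aeval_mul_add_natCast_mul hμmonic hfg (hker · |>.1) hx hy.symm
    have hf_root : aeval x μ * aeval x h + p * aeval x g = 0 := by
      simpa [hfg] using (hker _).2 dvd_rfl
    have hps : (p : Algebra.adjoin ℤ {θ}) * s = p * (aeval x μ * b - aeval x g * t) := by
      linear_combination hy + t * hf_root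
    refine hs ?_
    rw [mul_left_cancel₀ (Nat.cast_ne_zero.2 (Fact.out : p.Prime).ne_zero) hps]
    exact 𝓟.sub_mem (𝓟.mul_mem_right _ hμ𝓟) (𝓟.mul_mem_right _ hg)
end
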